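/- arXiv:2408.03114 — 3 statements merged into one kernel-verified Lean document; each statement's English description precedes it below -/
import Mathlib

section
/- For all real numbers T, m, λ, μ, b with 0 < T ≤ 1, m ≥ 1, λ ≥ 1, μ ≥ 1 and 0 ≤ b ≤ 1, one has (4/T)·λ²·μ²·e^{μ(6m−4)}·(μ·e^{μ(6m+6)} − e^{μ(6m+b)}) ≥ 2·λ²·μ³·e^{2μ(6m+1)}. -/
/-- Lower bound for the time derivative at `t = 0` of the Carleman weight exponent. -/
theorem stmt0 (T m lam mu b : ℝ) (hT0 : 0 < T) (hT1 : T ≤ 1)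
    (hm : 1 ≤ m) (hlam : 1 ≤ lam) (hmu : 1 ≤ mu) (hb0 : 0 ≤ b) (hb1 : b ≤ 1) :
    (4 / T) * lam ^ 2 * mu ^ 2 * Real.exp (mu * (6 * m - 4)) *
        (mu * Real.exp (mu * (6 * m + 6)) - Real.exp (mu * (6 * m + b)))
      ≥ 2 * lam ^ 2 * mu ^ 3 * Real.exp (2 * mu * (6 * m + 1)) := by
  set E := Real.exp (2 * mu * (6 * m + 1)) with hEdef
  have hEpos : 0 < E := Real.exp_pos _
  have hE : Real.exp (mu * (6 * m - 4)) * Real.exp (mu * (6 * m + 6)) = E := by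
    rw [← Real.exp_add, hEdef]; exact congrArg Real.exp (by ring)
  have hF : Real.exp (mu * (6 * m - 4)) * Real.exp (mu * (6 * m + b)) ≤ E / 2 := by
    rw [← Real.exp_add]
    have h1 : mu * (6 * m - 4) + mu * (6 * m + b) ≤ 2 * mu * (6 * m + 1) - 5 := by
      nlinarith
    have h2 : Real.exp (-5 : ℝ) ≤ 1 / 2 := by
      have hmul : Real.exp (-5 : ℝ) * Real.exp (5 : ℝ) = 1 := by
        rw [← Real.exp_add]; norm_num
      have h5 : (2 : ℝ) ≤ Real.exp 5 := by linarith [Real.add_one_le_exp (5 : ℝ)]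
      nlinarith [Real.exp_pos (-5 : ℝ)]
    calc Real.exp (mu * (6 * m - 4) + mu * (6 * m + b))
        ≤ Real.exp (2 * mu * (6 * m + 1) - 5) := Real.exp_le_exp.2 h1
      _ = E * Real.exp (-5) := by rw [← Real.exp_add]; exact congrArg Real.exp (by ring)
      _ ≤ E / 2 := by nlinarith
  have key : Real.exp (mu * (6 * m - 4)) *
      (mu * Real.exp (mu * (6 * m + 6)) - Real.exp (mu * (6 * m + b)))
      ≥ mu * E / 2 := by
    have h3 : Real.exp (mu * (6 * m - 4)) * (mu * Real.exp (mu * (6 * m + 6)))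
        = mu * E := by rw [← hE]; ring
    nlinarith
  have hC : (0:ℝ) < lam ^ 2 * mu ^ 2 := by positivity
  have step1 : (4 / T) * lam ^ 2 * mu ^ 2 * (Real.exp (mu * (6 * m - 4)) *
      (mu * Real.exp (mu * (6 * m + 6)) - Real.exp (mu * (6 * m + b))))
      ≥ (4 / T) * lam ^ 2 * mu ^ 2 * (mu * E / 2) := by
    have hpos : (0:ℝ) ≤ (4 / T) * lam ^ 2 * mu ^ 2 := by positivity
    exact mul_le_mul_of_nonneg_left key hpos
  have step2 : (4 / T) * lam ^ 2 * mu ^ 2 * (mu * E / 2)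
      ≥ 2 * lam ^ 2 * mu ^ 3 * E := by
    have h4 : 4 / T ≥ 4 := by
      rw [ge_iff_le, le_div_iff₀ hT0]; nlinarith
    have hpos2 : (0:ℝ) ≤ lam ^ 2 * mu ^ 2 * (mu * E / 2) := by positivity
    nlinarith [mul_le_mul_of_nonneg_right h4 hpos2]
  calc (4 / T) * lam ^ 2 * mu ^ 2 * Real.exp (mu * (6 * m - 4)) *
        (mu * Real.exp (mu * (6 * m + 6)) - Real.exp (mu * (6 * m + b)))
      = (4 / T) * lam ^ 2 * mu ^ 2 * (Real.exp (mu * (6 * m - 4)) *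
        (mu * Real.exp (mu * (6 * m + 6)) - Real.exp (mu * (6 * m + b)))) := by ring
    _ ≥ (4 / T) * lam ^ 2 * mu ^ 2 * (mu * E / 2) := step1
    _ ≥ 2 * lam ^ 2 * mu ^ 3 * E := step2
end

section
/- Let T, m, λ, μ be real numbers with 0 < T ≤ 1, m ≥ 1, λ ≥ 1, μ ≥ 1, set σ = λμ²e^{μ(6m−4)} and γ(t) = 1 + (1 − 4t/T)^σ for t ∈ [0, T/4). Then for every t ∈ [0, T/4) and every b ∈ [0,1]: the second derivative of γ at t equals (16σ(σ−1)/T²)(1 − 4t/T)^{σ−2}, it is nonnegative, and λ·γ″(t)·(μ·e^{μ(6m+6)} − e^{μ(6m+b)}) ≤ (8/T²)·λ³·μ²·(γ(t)·e^{μ(6m+b)})³. -/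
/-!
With `x = 1 - 4t/T ∈ (0, 1]` one has `γ'' = 16σ(σ-1)x^{σ-2}/T²`, and `σ ≥ 2` since `m, λ, μ ≥ 1`,
so `0 ≤ σ(σ-1)x^{σ-2} ≤ σ²`. Substituting `σ = λμ²e^{μ(6m-4)}` bounds the left-hand side by
`16λ³μ⁵e^{μ(18m-2)}/T²`; the gap `e^{2μ}` between `e^{μ(18m-2)}` and `e^{18mμ} ≤ e^{3μ(6m+b)}`
absorbs `2μ³`, and finally `γ ≥ 1`.
-/

open Real

lemma hasDerivAt_affine_rpow {a k σ t : ℝ} (h : 0 < a + k * t) :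
    HasDerivAt (fun s => (a + k * s) ^ σ) (k * σ * (a + k * t) ^ (σ - 1)) t := by
  simpa using ((hasDerivAt_id t).const_mul k |>.const_add a).rpow_const (p := σ) (Or.inl h.ne')

lemma deriv_deriv_affine_rpow {a k σ t : ℝ} (h : 0 < a + k * t) :
    deriv (deriv fun s => (a + k * s) ^ σ) t = k ^ 2 * σ * (σ - 1) * (a + k * t) ^ (σ - 2) := by
  have hderiv : (deriv fun s => (a + k * s) ^ σ) =ᶠ[nhds t]
      fun s => k * σ * (a + k * s) ^ (σ - 1) := by
    have hopen : IsOpen {s : ℝ | 0 < a + k * s} := isOpen_lt continuous_const (by fun_prop)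
    filter_upwards [hopen.mem_nhds h] with s hs
    exact (hasDerivAt_affine_rpow hs).deriv
  rw [hderiv.deriv_eq, ((hasDerivAt_affine_rpow (σ := σ - 1) h).const_mul (k * σ)).deriv]
  ring_nf

lemma deriv_deriv_one_add_one_sub_rpow {T σ t : ℝ} (h : 0 < 1 - 4 * t / T) :
    deriv (deriv fun s => 1 + (1 - 4 * s / T) ^ σ) t
      = 16 * σ * (σ - 1) / T ^ 2 * (1 - 4 * t / T) ^ (σ - 2) := by
  have haffine : (fun s => 1 + (1 - 4 * s / T) ^ σ) = fun s => 1 + (1 + (-4 / T) * s) ^ σ :=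
    funext fun s => by ring_nf
  have ht : 1 + (-4 / T) * t = 1 - 4 * t / T := by ring
  rw [haffine, deriv_const_add', deriv_deriv_affine_rpow (ht ▸ h), ht]
  ring

lemma two_mul_pow_three_le_exp_two_mul (x : ℝ) : 2 * x ^ 3 ≤ exp (2 * x) := by
  rcases le_total x 0 with hx | hx
  · nlinarith [exp_pos (2 * x), pow_two_nonneg x]
  · have h := sum_le_exp_of_nonneg (by linarith : (0 : ℝ) ≤ 2 * x) 5
    simp only [Finset.sum_range_succ, Finset.sum_range_zero] at h
    norm_num [Nat.factorial] at h
    nlinarith [pow_nonneg hx 3, pow_nonneg hx 4, sq_nonneg x]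

lemma two_le_mul_sq_mul_exp {lam mu m : ℝ} (hlam : 1 ≤ lam) (hmu : 1 ≤ mu) (hm : 1 ≤ m) :
    2 ≤ lam * mu ^ 2 * exp (mu * (6 * m - 4)) := by
  have hexp : 2 ≤ exp (mu * (6 * m - 4)) := by
    nlinarith [add_one_le_exp (mu * (6 * m - 4))]
  have hlammu : 1 ≤ lam * mu ^ 2 := one_le_mul_of_one_le_of_one_le hlam (one_le_pow₀ hmu)
  nlinarith

lemma two_mul_sq_mul_exp_le_exp_cube (m : ℝ) {mu b : ℝ} (hmu : 0 ≤ mu) (hb : 0 ≤ b) :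
    2 * (mu ^ 2 * exp (mu * (6 * m - 4))) ^ 2 * (mu * exp (mu * (6 * m + 6)))
      ≤ mu ^ 2 * exp (mu * (6 * m + b)) ^ 3 := by
  calc 2 * (mu ^ 2 * exp (mu * (6 * m - 4))) ^ 2 * (mu * exp (mu * (6 * m + 6)))
      = mu ^ 2 * (2 * mu ^ 3 * exp (mu * (18 * m - 2))) := by
        rw [show mu * (18 * m - 2) = mu * (6 * m - 4) + mu * (6 * m - 4) + mu * (6 * m + 6) by ring,
          exp_add, exp_add]
        ring
    _ ≤ mu ^ 2 * (exp (2 * mu) * exp (mu * (18 * m - 2))) := by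
        gcongr; exact two_mul_pow_three_le_exp_two_mul mu
    _ = mu ^ 2 * exp (mu * (18 * m)) := by rw [← exp_add]; ring_nf
    _ ≤ mu ^ 2 * exp (mu * (6 * m + b)) ^ 3 := by
        rw [← exp_nat_mul]
        gcongr ?_ * exp ?_
        push_cast
        nlinarith [mul_nonneg hmu hb]

theorem stmt4_general (T m lam mu σ : ℝ) (hT0 : 0 < T) (hm : 1 ≤ m)
    (hlam : 1 ≤ lam) (hmu : 1 ≤ mu)
    (hσ : σ = lam * mu ^ 2 * Real.exp (mu * (6 * m - 4)))
    (γ : ℝ → ℝ) (hγ : ∀ t, γ t = 1 + (1 - 4 * t / T) ^ σ) :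
    ∀ t ∈ Set.Ico (0 : ℝ) (T / 4), ∀ b ∈ Set.Icc (0 : ℝ) 1,
      deriv (deriv γ) t = 16 * σ * (σ - 1) / T ^ 2 * (1 - 4 * t / T) ^ (σ - 2) ∧
      0 ≤ deriv (deriv γ) t ∧
      lam * deriv (deriv γ) t *
          (mu * Real.exp (mu * (6 * m + 6)) - Real.exp (mu * (6 * m + b)))
        ≤ 8 / T ^ 2 * lam ^ 3 * mu ^ 2 * (γ t * Real.exp (mu * (6 * m + b))) ^ 3 := by
  rintro t ⟨ht0, htT⟩ b ⟨hb0, -⟩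
  set x := 1 - 4 * t / T with hx
  have hx0 : 0 < x := by rw [hx, sub_pos, div_lt_one hT0]; linarith
  have hx1 : x ≤ 1 := by rw [hx, sub_le_self_iff]; positivity
  have hγ'' : deriv (deriv γ) t = 16 * σ * (σ - 1) / T ^ 2 * x ^ (σ - 2) := by
    rw [funext hγ]; exact deriv_deriv_one_add_one_sub_rpow hx0
  have hσ2 : 2 ≤ σ := hσ ▸ two_le_mul_sq_mul_exp hlam hmu hm
  have hc0 : 0 ≤ x ^ (σ - 2) := rpow_nonneg hx0.le _
  have hc1 : x ^ (σ - 2) ≤ 1 := rpow_le_one hx0.le hx1 (by linarith)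
  have hσσ : 0 ≤ σ * (σ - 1) := mul_nonneg (by linarith) (by linarith)
  refine ⟨hγ'', ?_, ?_⟩
  · rw [hγ'']
    exact mul_nonneg (div_nonneg (by linarith) (sq_nonneg T)) hc0
  have hγ1 : 1 ≤ γ t := by rw [hγ]; linarith [rpow_nonneg hx0.le σ]
  set A := mu * exp (mu * (6 * m + 6))
  set B := exp (mu * (6 * m + b))
  calc lam * deriv (deriv γ) t * (A - B)
      = 16 / T ^ 2 * lam * (σ * (σ - 1) * x ^ (σ - 2)) * (A - B) := by rw [hγ'']; ring
    _ ≤ 16 / T ^ 2 * lam * (σ * (σ - 1) * x ^ (σ - 2)) * A := by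
        gcongr; exact sub_le_self _ (exp_pos _).le
    _ ≤ 16 / T ^ 2 * lam * σ ^ 2 * A := by
        gcongr
        nlinarith
    _ = 8 / T ^ 2 * lam ^ 3 * (2 * (mu ^ 2 * exp (mu * (6 * m - 4))) ^ 2 * A) := by
        rw [hσ]; ring
    _ ≤ 8 / T ^ 2 * lam ^ 3 * (mu ^ 2 * B ^ 3) := by
        gcongr 8 / T ^ 2 * lam ^ 3 * ?_
        exact two_mul_sq_mul_exp_le_exp_cube m (by linarith) hb0
    _ ≤ 8 / T ^ 2 * lam ^ 3 * mu ^ 2 * (γ t * B) ^ 3 := by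
        rw [← mul_assoc]; gcongr; exact le_mul_of_one_le_left (exp_pos _).le hγ1

/-- The estimate `|ℓ_tt| ≤ Cλ³μ²ξ³` on `(0, T/4)` for the initial piece
`γ(t) = 1 + (1 - 4t/T)^σ` of the time weight, with `σ = λμ²e^{μ(6m-4)}`. -/
theorem stmt4 (T m lam mu σ : ℝ) (hT0 : 0 < T) (hT1 : T ≤ 1) (hm : 1 ≤ m)
    (hlam : 1 ≤ lam) (hmu : 1 ≤ mu)
    (hσ : σ = lam * mu ^ 2 * Real.exp (mu * (6 * m - 4)))
    (γ : ℝ → ℝ) (hγ : ∀ t, γ t = 1 + (1 - 4 * t / T) ^ σ) :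
    ∀ t ∈ Set.Ico (0 : ℝ) (T / 4), ∀ b ∈ Set.Icc (0 : ℝ) 1,
      deriv (deriv γ) t = 16 * σ * (σ - 1) / T ^ 2 * (1 - 4 * t / T) ^ (σ - 2) ∧
      0 ≤ deriv (deriv γ) t ∧
      lam * deriv (deriv γ) t *
          (mu * Real.exp (mu * (6 * m + 6)) - Real.exp (mu * (6 * m + b)))
        ≤ 8 / T ^ 2 * lam ^ 3 * mu ^ 2 * (γ t * Real.exp (mu * (6 * m + b))) ^ 3 :=
  stmt4_general T m lam mu σ hT0 hm hlam hmu hσ γ hγ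
end

section
/- Let n be a positive integer and K ≥ 1 a real number. Let a^{jk} : ℝⁿ → ℝ (1 ≤ j,k ≤ n) be continuously differentiable with a^{jk} = a^{kj}, |a^{jk}(x)| ≤ K and |∂_{x_l} a^{jk}(x)| ≤ K for all x, j, k, l; let β : ℝⁿ → ℝ be twice continuously differentiable with 0 ≤ β(x) ≤ 1, |∂_{x_j}β(x)| ≤ K and |∂_{x_j}∂_{x_k}β(x)| ≤ K for all x, j, k. Fix real numbers m ≥ 1, λ ≥ 1, μ ≥ 1, γ > 0, and set ξ(x) = γ·e^{μ(6m+β(x))} and ℓ(x) = λγ·(e^{μ(6m+β(x))} − μe^{μ(6m+6)}). Then there exists a constant C depending only on n and K such that the function A(x) = Σ_{j,k=1}^n [a^{jk}(x)·∂_jℓ(x)·∂_kℓ(x) − ∂_k(a^{jk}·∂_jℓ)(x)] satisfies |A(x) − λ²μ²ξ(x)²Ψ(x)| ≤ C·λμ²ξ(x) for all x ∈ ℝⁿ, where Ψ(x) = Σ_{j,k=1}^n a^{jk}(x)·∂_jβ(x)·∂_kβ(x). -/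
/-!
Since `ℓ = λγ e^{μ(6m+β)} + const`, its gradient is `∂_j ℓ = λμξ ∂_jβ`. Hence the quadratic part
`a^{jk} ℓ_j ℓ_k` is exactly `λ²μ²ξ² a^{jk} β_j β_k`, while the product rule gives
`∂_k(a^{jk} ℓ_j) = λμξ (∂_k a^{jk} β_j + a^{jk} β_{jk} + μ a^{jk} β_j β_k)`,
and each bracket is at most `3μK³`, so the defect is at most `3n²K³ λμ²ξ`.
-/

/-- The `j`-th partial derivative of a function on `ℝⁿ`. -/
noncomputable def pd {n : ℕ} (f : EuclideanSpace ℝ (Fin n) → ℝ) (j : Fin n)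
    (x : EuclideanSpace ℝ (Fin n)) : ℝ :=
  fderiv ℝ f x (EuclideanSpace.single j 1)

/-- The Carleman weight exponent `ℓ(x) = λγ(e^{μ(6m+β(x))} - μe^{μ(6m+6)})` at frozen time. -/
noncomputable def ellFun {n : ℕ} (m lam mu γ : ℝ) (β : EuclideanSpace ℝ (Fin n) → ℝ)
    (x : EuclideanSpace ℝ (Fin n)) : ℝ :=
  lam * γ * (Real.exp (mu * (6 * m + β x)) - mu * Real.exp (mu * (6 * m + 6)))

/-- The auxiliary function `A = Σ_{j,k} (a^{jk} ℓ_j ℓ_k - (a^{jk} ℓ_j)_k)`. -/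
noncomputable def Afun {n : ℕ} (a : Fin n → Fin n → EuclideanSpace ℝ (Fin n) → ℝ)
    (ℓ : EuclideanSpace ℝ (Fin n) → ℝ) (x : EuclideanSpace ℝ (Fin n)) : ℝ :=
  ∑ j : Fin n, ∑ k : Fin n,
    (a j k x * pd ℓ j x * pd ℓ k x - pd (fun y => a j k y * pd ℓ j y) k x)

open Finset

section PartialDerivative

variable {n : ℕ} {f g β : EuclideanSpace ℝ (Fin n) → ℝ} {x : EuclideanSpace ℝ (Fin n)}

lemma pd_mul (hf : DifferentiableAt ℝ f x) (hg : DifferentiableAt ℝ g x) (k : Fin n) :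
    pd (fun y => f y * g y) k x = f x * pd g k x + g x * pd f k x := by
  simp [pd, fderiv_fun_mul hf hg]

lemma pd_const_mul (c : ℝ) (hf : DifferentiableAt ℝ f x) (k : Fin n) :
    pd (fun y => c * f y) k x = c * pd f k x := by
  simp [pd, fderiv_const_mul hf c]

lemma pd_sub_const (c : ℝ) (k : Fin n) : pd (fun y => f y - c) k x = pd f k x := by
  simp [pd, fderiv_sub_const]

lemma pd_exp_mul_const_add (c s : ℝ) (hβ : DifferentiableAt ℝ β x) (k : Fin n) :
    pd (fun y => Real.exp (c * (s + β y))) k x = c * Real.exp (c * (s + β x)) * pd β k x := by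
  simp only [pd, fderiv_exp ((hβ.const_add s).const_mul c), fderiv_const_mul (hβ.const_add s),
    fderiv_const_add, smul_apply, smul_eq_mul]
  ring

lemma ContDiff.pd (hβ : ContDiff ℝ 2 β) (j : Fin n) : ContDiff ℝ 1 (pd β j) :=
  (hβ.fderiv_right le_rfl).clm_apply contDiff_const

end PartialDerivative

section CarlemanWeight

variable {n : ℕ} {β : EuclideanSpace ℝ (Fin n) → ℝ} (m lam mu γ : ℝ)

lemma pd_ellFun (hβ : Differentiable ℝ β) (j : Fin n) (x : EuclideanSpace ℝ (Fin n)) :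
    pd (ellFun m lam mu γ β) j x = lam * γ * mu * (pd β j x * Real.exp (mu * (6 * m + β x))) := by
  have hexp : DifferentiableAt ℝ (fun y => Real.exp (mu * (6 * m + β y))) x :=
    (((hβ x).const_add _).const_mul _).exp
  unfold ellFun
  rw [pd_const_mul (lam * γ) (hexp.sub_const _), pd_sub_const,
    pd_exp_mul_const_add mu _ (hβ x)]
  ring

lemma pd_mul_pd_ellFun {f : EuclideanSpace ℝ (Fin n) → ℝ} (hβ : ContDiff ℝ 2 β)
    (j k : Fin n) (x : EuclideanSpace ℝ (Fin n)) (hf : DifferentiableAt ℝ f x) :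
    pd (fun y => f y * pd (ellFun m lam mu γ β) j y) k x =
      lam * γ * mu * Real.exp (mu * (6 * m + β x)) *
        (pd f k x * pd β j x + f x * pd (pd β j) k x + mu * (f x * pd β j x * pd β k x)) := by
  have hβd : Differentiable ℝ β := hβ.differentiable two_ne_zero
  have hβjd : DifferentiableAt ℝ (pd β j) x := (hβ.pd j).differentiable one_ne_zero x
  have hexp : DifferentiableAt ℝ (fun y => Real.exp (mu * (6 * m + β y))) x :=
    (((hβd x).const_add _).const_mul _).exp
  have hprod : DifferentiableAt ℝ (fun y => pd β j y * Real.exp (mu * (6 * m + β y))) x :=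
    hβjd.mul hexp
  simp_rw [pd_ellFun m lam mu γ hβd j]
  rw [pd_mul hf (hprod.const_mul _), pd_const_mul _ hprod, pd_mul hβjd hexp,
    pd_exp_mul_const_add mu _ (hβd x)]
  ring

lemma Afun_ellFun_sub (a : Fin n → Fin n → EuclideanSpace ℝ (Fin n) → ℝ)
    (ha : ∀ j k, Differentiable ℝ (a j k)) (hβ : ContDiff ℝ 2 β) (x : EuclideanSpace ℝ (Fin n)) :
    Afun a (ellFun m lam mu γ β) x -
        lam ^ 2 * mu ^ 2 * (γ * Real.exp (mu * (6 * m + β x))) ^ 2 *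
          (∑ j : Fin n, ∑ k : Fin n, a j k x * pd β j x * pd β k x) =
      -(lam * mu * (γ * Real.exp (mu * (6 * m + β x)))) *
        ∑ j : Fin n, ∑ k : Fin n, (pd (a j k) k x * pd β j x + a j k x * pd (pd β j) k x
          + mu * (a j k x * pd β j x * pd β k x)) := by
  simp only [Afun, mul_sum, ← sum_sub_distrib]
  refine sum_congr rfl fun j _ => sum_congr rfl fun k _ => ?_
  rw [pd_ellFun m lam mu γ (hβ.differentiable two_ne_zero),
    pd_ellFun m lam mu γ (hβ.differentiable two_ne_zero),
    pd_mul_pd_ellFun m lam mu γ hβ j k x (ha j k x)]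
  ring

end CarlemanWeight

lemma abs_lowerOrderTerm_le {K mu p q r s t u : ℝ} (hK : 1 ≤ K) (hmu : 1 ≤ mu)
    (hp : |p| ≤ K) (hq : |q| ≤ K) (hr : |r| ≤ K) (hs : |s| ≤ K) (ht : |t| ≤ K) (hu : |u| ≤ K) :
    |p * q + r * s + mu * (r * t * u)| ≤ 3 * K ^ 3 * mu := by
  have hKK : K * K ≤ K ^ 3 * mu := by nlinarith [mul_le_mul hK hmu zero_le_one (by linarith)]
  calc |p * q + r * s + mu * (r * t * u)|
      ≤ |p * q| + |r * s| + |mu * (r * t * u)| := abs_add_three _ _ _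
    _ = |p| * |q| + |r| * |s| + mu * (|r| * |t| * |u|) := by
        simp only [abs_mul, abs_of_pos (zero_lt_one.trans_le hmu)]
    _ ≤ K * K + K * K + mu * (K * K * K) := by gcongr
    _ ≤ 3 * K ^ 3 * mu := by linarith

lemma abs_sum_sum_le_card_sq_mul {ι : Type*} [Fintype ι] {f : ι → ι → ℝ} {B : ℝ}
    (h : ∀ j k, |f j k| ≤ B) :
    |∑ j, ∑ k, f j k| ≤ (Fintype.card ι : ℝ) ^ 2 * B := by
  calc |∑ j, ∑ k, f j k| ≤ ∑ j, ∑ k, |f j k| :=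
        (abs_sum_le_sum_abs _ _).trans (sum_le_sum fun j _ => abs_sum_le_sum_abs _ _)
    _ ≤ ∑ _j : ι, ∑ _k : ι, B := sum_le_sum fun j _ => sum_le_sum fun k _ => h j k
    _ = (Fintype.card ι : ℝ) ^ 2 * B := by simp [sum_const, card_univ]; ring

/-- The expansion `A = λ²μ²ξ²Ψ + O(λ)μ²ξ` of the auxiliary function in the Carleman
identity, with a constant depending only on `n` and `K`. -/
theorem stmt7 (n : ℕ) (hn : 0 < n) (K : ℝ) (hK : 1 ≤ K) :
    ∃ C : ℝ, 0 < C ∧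
      ∀ (a : Fin n → Fin n → EuclideanSpace ℝ (Fin n) → ℝ)
        (β : EuclideanSpace ℝ (Fin n) → ℝ) (m lam mu γ : ℝ),
        (∀ j k, ContDiff ℝ 1 (a j k)) →
        (∀ j k, a j k = a k j) →
        (∀ j k x, |a j k x| ≤ K) →
        (∀ j k l x, |pd (a j k) l x| ≤ K) →
        ContDiff ℝ 2 β →
        (∀ x, 0 ≤ β x ∧ β x ≤ 1) →
        (∀ j x, |pd β j x| ≤ K) →
        (∀ j k x, |pd (pd β j) k x| ≤ K) →
        1 ≤ m → 1 ≤ lam → 1 ≤ mu → 0 < γ →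
        ∀ x,
          |Afun a (ellFun m lam mu γ β) x -
              lam ^ 2 * mu ^ 2 * (γ * Real.exp (mu * (6 * m + β x))) ^ 2 *
                (∑ j : Fin n, ∑ k : Fin n, a j k x * pd β j x * pd β k x)|
            ≤ C * lam * mu ^ 2 * (γ * Real.exp (mu * (6 * m + β x))) := by
  refine ⟨3 * (n : ℝ) ^ 2 * K ^ 3, by positivity, ?_⟩
  intro a β m lam mu γ ha _ haK hadK hβ _ hβK hβ2K _ hlam hmu hγ x
  have hweight : 0 ≤ lam * mu * (γ * Real.exp (mu * (6 * m + β x))) := by positivity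
  rw [Afun_ellFun_sub m lam mu γ a (fun j k => (ha j k).differentiable one_ne_zero) hβ x,
    abs_mul, abs_neg, abs_of_nonneg hweight]
  have hsum := abs_sum_sum_le_card_sq_mul fun j k =>
    abs_lowerOrderTerm_le hK hmu (hadK j k k x) (hβK j x) (haK j k x) (hβ2K j k x) (hβK j x)
      (hβK k x)
  rw [Fintype.card_fin] at hsum
  calc lam * mu * (γ * Real.exp (mu * (6 * m + β x))) * _
      ≤ lam * mu * (γ * Real.exp (mu * (6 * m + β x))) * ((n : ℝ) ^ 2 * (3 * K ^ 3 * mu)) :=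
        mul_le_mul_of_nonneg_left hsum hweight
    _ = _ := by ring
end
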